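/- The length of the reflection r_θ in the highest root θ, as an element of the Weyl group, equals 2h∨ − 3, where h∨ is the dual Coxeter number. -/

import Mathlib

open RealInnerProductSpace Finset
open scoped Classical

/-- The data of a reduced irreducible (crystallographic) root system of a
finite-dimensional complex simple Lie algebra, realized in a real inner
product space, together with a choice of positive roots and the highest
root `θ`, with the invariant form normalized so that `(θ,θ) = 2`. -/
structure SimpleRootData (V : Type*) [NormedAddCommGroup V]
    [InnerProductSpace ℝ V] [FiniteDimensional ℝ V] where
  /-- the set of roots Δ -/
  Δ : Finset V
  /-- the set of positive roots Δ₊ -/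
  Pos : Finset V
  /-- the highest root θ -/
  θ : V
  zero_not_mem : (0 : V) ∉ Δ
  span_eq_top : Submodule.span ℝ (Δ : Set V) = ⊤
  neg_mem : ∀ α ∈ Δ, -α ∈ Δ
  reflect_mem : ∀ α ∈ Δ, ∀ β ∈ Δ,
    β - (2 * (inner ℝ β α : ℝ) / (inner ℝ α α : ℝ)) • α ∈ Δ
  integral : ∀ α ∈ Δ, ∀ β ∈ Δ, ∃ n : ℤ, 2 * (inner ℝ β α : ℝ) / (inner ℝ α α : ℝ) = (n : ℝ)
  reduced : ∀ α ∈ Δ, ∀ t : ℝ, t • α ∈ Δ → t = 1 ∨ t = -1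
  /-- irreducibility (simplicity of the Lie algebra) -/
  irreducible : ∀ s ⊆ Δ, (∀ α ∈ s, ∀ β ∈ Δ, β ∉ s → (inner ℝ α β : ℝ) = 0) →
    s = ∅ ∨ s = Δ
  pos_subset : Pos ⊆ Δ
  pos_iff : ∀ α ∈ Δ, α ∈ Pos ↔ -α ∉ Pos
  pos_add : ∀ α ∈ Pos, ∀ β ∈ Pos, α + β ∈ Δ → α + β ∈ Pos
  θ_pos : θ ∈ Pos
  /-- θ is the highest root -/
  θ_highest : ∀ α ∈ Pos, θ + α ∉ Δ
  /-- normalization (θ,θ) = 2 -/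
  θ_norm : (inner ℝ θ θ : ℝ) = 2

namespace SimpleRootData

variable {V : Type*} [NormedAddCommGroup V] [InnerProductSpace ℝ V]
  [FiniteDimensional ℝ V] (D : SimpleRootData V)

/-- ρ, half the sum of the positive roots. -/
noncomputable def ρ : V := (2 : ℝ)⁻¹ • ∑ α ∈ D.Pos, α

/-- The dual Coxeter number h∨ = (ρ,θ) + 1. -/
noncomputable def h : ℝ := (inner ℝ D.ρ D.θ : ℝ) + 1

/-- The reflection r_θ in the highest root θ. -/
noncomputable def rθ (x : V) : V := x - (2 * (inner ℝ x D.θ : ℝ) / (inner ℝ D.θ D.θ : ℝ)) • D.θ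

/-- A positive root α is *special* if θ − α is also a root. -/
def IsSpecial (α : V) : Prop := α ∈ D.Pos ∧ D.θ - α ∈ D.Δ

/-- The set of special roots. -/
noncomputable def specials : Finset V :=
  D.Pos.filter fun α => D.θ - α ∈ D.Δ

/-- The set of positive roots not orthogonal to θ. -/
noncomputable def nonOrth : Finset V :=
  D.Pos.filter fun α => (inner ℝ α D.θ : ℝ) ≠ 0

end SimpleRootData

/-! For a positive root `α ≠ θ` one has `(α, θ) ∈ {0, 1}`. It is nonnegative, since otherwise
`α + θ` would be a root. If it is positive, then `θ - α` is a positive root, so `(α, θ) ≤ 2`,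
and `(α, θ) = 2` is impossible because `-r_θ α = 2θ - α = θ + (θ - α)` would be a root.
Since `r_θ α = α - (α, θ) θ`, the positive roots made negative by `r_θ` are exactly those not
orthogonal to `θ`, and summing `(α, θ)` over `Δ₊` gives `2 (ρ, θ) = 2 + (ℓ(r_θ) - 1)`. -/

namespace SimpleRootData

variable {V : Type*} [NormedAddCommGroup V] [InnerProductSpace ℝ V]
  [FiniteDimensional ℝ V] {D : SimpleRootData V} {α β : V}

lemma ne_zero_of_mem (hα : α ∈ D.Δ) : α ≠ 0 :=
  fun h => D.zero_not_mem (h ▸ hα)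

lemma inner_self_pos_of_mem (hα : α ∈ D.Δ) : 0 < ⟪α, α⟫ :=
  real_inner_self_pos.2 (ne_zero_of_mem hα)

lemma inner_mul_inner_lt_of_mem (hα : α ∈ D.Δ) (hβ : β ∈ D.Δ) (hne : α ≠ β)
    (hne' : α ≠ -β) : ⟪α, β⟫ * ⟪α, β⟫ < ⟪α, α⟫ * ⟪β, β⟫ := by
  refine (real_inner_mul_inner_self_le α β).lt_of_ne fun h => ?_
  have hnorm : ‖⟪α, β⟫‖ = ‖α‖ * ‖β‖ := by
    rw [← sq_eq_sq₀ (norm_nonneg _) (by positivity), mul_pow, Real.norm_eq_abs, sq_abs,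
      ← real_inner_self_eq_norm_sq, ← real_inner_self_eq_norm_sq, sq, h]
  obtain ⟨r, -, rfl⟩ :=
    (norm_inner_eq_norm_iff (ne_zero_of_mem hα) (ne_zero_of_mem hβ)).1 hnorm
  rcases D.reduced α hα r hβ with rfl | rfl
  · exact hne (one_smul ℝ α).symm
  · exact hne' (by rw [neg_one_smul, neg_neg])

/-- The two Cartan integers of `α` and `β` are positive with product `< 4`, so one of them is
`1`, and the corresponding reflection gives `±(α - β)`. -/
lemma sub_mem_of_inner_pos (hα : α ∈ D.Δ) (hβ : β ∈ D.Δ) (hne : α ≠ β)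
    (hpos : 0 < ⟪α, β⟫) : α - β ∈ D.Δ := by
  have hne' : α ≠ -β := by
    rintro rfl
    rw [inner_neg_left] at hpos
    linarith [inner_self_pos_of_mem hβ]
  have hαα := inner_self_pos_of_mem hα
  have hββ := inner_self_pos_of_mem hβ
  obtain ⟨n, hn⟩ := D.integral β hβ α hα
  obtain ⟨m, hm⟩ := D.integral α hα β hβ
  rw [real_inner_comm] at hm
  have hn0 : 0 < n := by exact_mod_cast hn ▸ (by positivity : 0 < 2 * ⟪α, β⟫ / ⟪β, β⟫)
  have hm0 : 0 < m := by exact_mod_cast hm ▸ (by positivity : 0 < 2 * ⟪α, β⟫ / ⟪α, α⟫)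
  have hnm : n * m < 4 := by
    have : (n * m : ℝ) < 4 := by
      rw [← hn, ← hm, div_mul_div_comm, div_lt_iff₀ (by positivity)]
      nlinarith [inner_mul_inner_lt_of_mem hα hβ hne hne']
    exact_mod_cast this
  obtain rfl | rfl : n = 1 ∨ m = 1 := by
    by_contra! h
    have hn2 : 2 ≤ n := by omega
    have hm2 : 2 ≤ m := by omega
    nlinarith
  · have := D.reflect_mem β hβ α hα
    rwa [hn, Int.cast_one, one_smul] at this
  · have := D.neg_mem _ (D.reflect_mem α hα β hβ)
    rwa [real_inner_comm α β, hm, Int.cast_one, one_smul, neg_sub] at this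

lemma add_mem_of_inner_neg (hα : α ∈ D.Δ) (hβ : β ∈ D.Δ) (hne : α ≠ -β)
    (hneg : ⟪α, β⟫ < 0) : α + β ∈ D.Δ := by
  simpa using sub_mem_of_inner_pos hα (D.neg_mem β hβ) hne (by simpa [inner_neg_right] using hneg)

lemma θ_mem : D.θ ∈ D.Δ := D.pos_subset D.θ_pos

lemma ne_neg_θ_of_mem_pos (hα : α ∈ D.Pos) : α ≠ -D.θ := by
  rintro rfl
  exact (D.pos_iff D.θ θ_mem).1 D.θ_pos hα

lemma inner_θ_eq_intCast (hα : α ∈ D.Δ) : ∃ n : ℤ, ⟪α, D.θ⟫ = n := by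
  obtain ⟨n, hn⟩ := D.integral D.θ θ_mem α hα
  exact ⟨n, by linarith [D.θ_norm ▸ hn]⟩

lemma inner_θ_nonneg (hα : α ∈ D.Pos) : 0 ≤ ⟪α, D.θ⟫ := by
  by_contra! hneg
  refine D.θ_highest α hα ?_
  rw [add_comm]
  exact add_mem_of_inner_neg (D.pos_subset hα) θ_mem (ne_neg_θ_of_mem_pos hα) hneg

lemma θ_sub_mem_pos (hα : α ∈ D.Pos) (hne : α ≠ D.θ) (hpos : 0 < ⟪α, D.θ⟫) :
    D.θ - α ∈ D.Pos := by
  have hΔ : D.θ - α ∈ D.Δ :=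
    sub_mem_of_inner_pos θ_mem (D.pos_subset hα) hne.symm (by rwa [real_inner_comm])
  by_contra hnot
  have hneg : α - D.θ ∈ D.Pos := by
    rw [← neg_sub]
    by_contra h
    exact hnot ((D.pos_iff _ hΔ).2 h)
  exact D.θ_highest _ hneg (by rw [add_sub_cancel]; exact D.pos_subset hα)

lemma inner_θ_eq_one (hα : α ∈ D.Pos) (hne : α ≠ D.θ) (h0 : ⟪α, D.θ⟫ ≠ 0) :
    ⟪α, D.θ⟫ = 1 := by
  have hpos : 0 < ⟪α, D.θ⟫ := (inner_θ_nonneg hα).lt_of_ne h0.symm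
  have hsub := θ_sub_mem_pos hα hne hpos
  have hle : ⟪α, D.θ⟫ ≤ 2 := by
    have := inner_θ_nonneg hsub
    rw [inner_sub_left, D.θ_norm] at this
    linarith
  have hne2 : ⟪α, D.θ⟫ ≠ 2 := by
    intro h2
    have := D.neg_mem _ (D.reflect_mem D.θ θ_mem α (D.pos_subset hα))
    rw [h2, D.θ_norm] at this
    exact D.θ_highest _ hsub (by convert this using 1; module)
  obtain ⟨n, hn⟩ := inner_θ_eq_intCast (D.pos_subset hα)
  rw [hn] at hpos hle hne2 ⊢
  have : n = 1 := by
    have : 0 < n := by exact_mod_cast hpos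
    have : n ≤ 2 := by exact_mod_cast hle
    have : n ≠ 2 := by exact_mod_cast hne2
    omega
  simp [this]

lemma inner_rθ_θ (x : V) : ⟪D.rθ x, D.θ⟫ = -⟪x, D.θ⟫ := by
  rw [rθ, inner_sub_left, real_inner_smul_left, D.θ_norm]
  ring

lemma rθ_not_mem_pos_iff (hα : α ∈ D.Pos) : D.rθ α ∉ D.Pos ↔ ⟪α, D.θ⟫ ≠ 0 := by
  constructor
  · intro h h0
    apply h
    rwa [rθ, h0, mul_zero, zero_div, zero_smul, sub_zero]
  · intro h0 hmem
    have := inner_θ_nonneg hmem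
    rw [inner_rθ_θ] at this
    exact h0 (le_antisymm (by linarith) (inner_θ_nonneg hα))

variable (D)

lemma sum_inner_θ_eq : ∑ α ∈ D.Pos, ⟪α, D.θ⟫ = 2 * D.h - 2 := by
  rw [h, ρ, real_inner_smul_left, sum_inner]
  ring

lemma card_nonOrth_add_one : (#D.nonOrth : ℝ) + 1 = ∑ α ∈ D.Pos, ⟪α, D.θ⟫ := by
  have hθ : D.θ ∈ D.nonOrth := mem_filter.2 ⟨D.θ_pos, by rw [D.θ_norm]; norm_num⟩
  have hone : ∀ α ∈ D.nonOrth.erase D.θ, ⟪α, D.θ⟫ = 1 := fun α hα =>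
    have hα' := (mem_filter.1 (mem_of_mem_erase hα))
    inner_θ_eq_one hα'.1 (ne_of_mem_erase hα) hα'.2
  calc (#D.nonOrth : ℝ) + 1 = (#(D.nonOrth.erase D.θ) : ℝ) + 2 := by
        rw [← card_erase_add_one hθ]; push_cast; ring
    _ = ∑ α ∈ D.nonOrth, ⟪α, D.θ⟫ := by
        rw [← sum_erase_add _ _ hθ, sum_congr rfl hone, D.θ_norm, sum_const, nsmul_one]
    _ = ∑ α ∈ D.Pos, ⟪α, D.θ⟫ := sum_filter_ne_zero _

end SimpleRootData

open SimpleRootData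

variable {V : Type*} [NormedAddCommGroup V] [InnerProductSpace ℝ V]
  [FiniteDimensional ℝ V]

/-- the length of r_θ in the Weyl group, i.e. the number of
positive roots sent by r_θ to negative roots, equals 2h∨ − 3. -/
theorem length_rtheta (D : SimpleRootData V) :
    (((D.Pos.filter fun α => D.rθ α ∉ D.Pos).card : ℝ)) = 2 * D.h - 3 := by
  have hlength : D.Pos.filter (fun α => D.rθ α ∉ D.Pos) = D.nonOrth :=
    filter_congr fun _ hα => rθ_not_mem_pos_iff hα
  rw [hlength]
  linarith [D.card_nonOrth_add_one, D.sum_inner_θ_eq]
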